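/- (Foschi–Klainerman hyperbolic null symbol bound) For η, ξ ∈ ℝ² with η ≠ 0, ξ ≠ η, |η₁(ξ-η)₂ - η₂(ξ-η)₁| / (|η||ξ-η|) ≲ |ξ|^{1/2}(|ξ| - ||η| - |ξ-η||)^{1/2} / (|η|^{1/2}|ξ-η|^{1/2}), provided ||η| - |ξ-η|| ≤ |ξ| (i.e., in the hyperbolic regime where the right side is defined). -/

import Mathlib

/-!
Write `a = |η|`, `b = |ξ - η|`, `c = |ξ|`, `d = |a - b|`. By Lagrange's identity the squared
cross product is `a²b² - ⟪η, ξ - η⟫²`, and eliminating the inner product through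
`c² = a² + b² + 2⟪η, ξ - η⟫` turns four times it into the Heron-type product
`((a + b)² - c²)(c² - d²)`. In the hyperbolic regime `d ≤ c` the first factor is at most `4ab`
and the second at most `2c(c - d)`, so the cross product is at most `√(2abc(c - d))`;
dividing by `ab` gives the bound with `C = √2`.
-/

open RealInnerProductSpace

theorem four_mul_sq_norm_mul_sq_norm_sub_sq_inner {E : Type*} [SeminormedAddCommGroup E]
    [InnerProductSpace ℝ E] (x y : E) :
    4 * (‖x‖ ^ 2 * ‖y‖ ^ 2 - ⟪x, y⟫ ^ 2) =
      ((‖x‖ + ‖y‖) ^ 2 - ‖x + y‖ ^ 2) * (‖x + y‖ ^ 2 - (‖x‖ - ‖y‖) ^ 2) := by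
  rw [norm_add_sq_real]
  ring

theorem heron_product_le {a b c : ℝ} (ha : 0 ≤ a) (hb : 0 ≤ b) (hc : |a - b| ≤ c) :
    ((a + b) ^ 2 - c ^ 2) * (c ^ 2 - (a - b) ^ 2) ≤ 4 * a * b * (2 * c * (c - |a - b|)) := by
  have hd : 0 ≤ |a - b| := abs_nonneg _
  rw [← sq_abs (a - b)]
  have hv : 0 ≤ c ^ 2 - |a - b| ^ 2 := by nlinarith
  have hu : (a + b) ^ 2 - c ^ 2 ≤ 4 * a * b := by nlinarith [sq_abs (a - b)]
  have hv' : c ^ 2 - |a - b| ^ 2 ≤ 2 * c * (c - |a - b|) := by nlinarith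
  exact mul_le_mul hu hv' hv (by positivity)

theorem EuclideanSpace.cross_sq_eq (x y : EuclideanSpace ℝ (Fin 2)) :
    (x 0 * y 1 - x 1 * y 0) ^ 2 = ‖x‖ ^ 2 * ‖y‖ ^ 2 - ⟪x, y⟫ ^ 2 := by
  simp only [EuclideanSpace.norm_sq_eq, Real.norm_eq_abs, sq_abs, Fin.sum_univ_two,
    PiLp.inner_apply, RCLike.inner_apply, conj_trivial]
  ring

theorem cross_sq_le_of_abs_sub_le (η ξ : EuclideanSpace ℝ (Fin 2))
    (h : |‖η‖ - ‖ξ - η‖| ≤ ‖ξ‖) :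
    (η 0 * (ξ - η) 1 - η 1 * (ξ - η) 0) ^ 2 ≤
      2 * (‖η‖ * ‖ξ - η‖) * (‖ξ‖ * (‖ξ‖ - |‖η‖ - ‖ξ - η‖|)) := by
  have heron := four_mul_sq_norm_mul_sq_norm_sub_sq_inner η (ξ - η)
  rw [add_sub_cancel] at heron
  have := heron_product_le (norm_nonneg η) (norm_nonneg (ξ - η)) h
  rw [EuclideanSpace.cross_sq_eq]
  linarith

theorem abs_div_le_sqrt_two_mul_of_sq_le {x a b c e : ℝ} (ha : 0 < a) (hb : 0 < b) (hc : 0 ≤ c)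
    (h : x ^ 2 ≤ 2 * (a * b) * (c * e)) :
    |x| / (a * b) ≤ √2 * (√c * √e / (√a * √b)) := by
  have hab : 0 < a * b := mul_pos ha hb
  calc |x| / (a * b) = |x / (a * b)| := by rw [abs_div, abs_of_pos hab]
    _ ≤ √(2 * (c * e) / (a * b)) := by
      refine Real.abs_le_sqrt ?_
      rw [div_pow, sq (a * b), ← div_div, div_le_div_iff_of_pos_right hab, div_le_iff₀ hab]
      linarith
    _ = √2 * (√c * √e / (√a * √b)) := by
      rw [Real.sqrt_div' _ hab.le, Real.sqrt_mul zero_le_two, Real.sqrt_mul hc,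
        Real.sqrt_mul ha.le, mul_div_assoc]

/-- Foschi–Klainerman hyperbolic null symbol bound: for η ≠ 0, ξ ≠ η in ℝ²
with ||η| - |ξ-η|| ≤ |ξ|,
|η₁(ξ-η)₂ - η₂(ξ-η)₁|/(|η||ξ-η|)
  ≲ |ξ|^{1/2}(|ξ| - ||η|-|ξ-η||)^{1/2}/(|η|^{1/2}|ξ-η|^{1/2}). -/
theorem nullform_hyperbolic_bound :
    ∃ C : ℝ, 0 < C ∧ ∀ (η ξ : EuclideanSpace ℝ (Fin 2)), η ≠ 0 → ξ ≠ η →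
      |‖η‖ - ‖ξ - η‖| ≤ ‖ξ‖ →
      |η 0 * (ξ - η) 1 - η 1 * (ξ - η) 0| / (‖η‖ * ‖ξ - η‖) ≤
        C * (Real.sqrt ‖ξ‖ * Real.sqrt (‖ξ‖ - |‖η‖ - ‖ξ - η‖|)
          / (Real.sqrt ‖η‖ * Real.sqrt ‖ξ - η‖)) := by
  refine ⟨√2, by positivity, fun η ξ hη hξη h => ?_⟩
  exact abs_div_le_sqrt_two_mul_of_sq_le (norm_pos_iff.mpr hη)
    (norm_pos_iff.mpr (sub_ne_zero.mpr hξη)) (norm_nonneg ξ) (cross_sq_le_of_abs_sub_le η ξ h)
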